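/- arXiv:math/0312514 — 2 statements merged into one kernel-verified Lean document; each statement's English description precedes it below -/
import Mathlib

section
/- For every integer r, define P_r : ℤ → ℚ by P_r(t) = 3·B_5(t) − (r−3)·B_4(t) + (r^2+7r+10)·B_3(t) + ((7r^3+30r^2+29r−54)/12)·B_2(t) + ((r^4−24r^3−197r^2−560r−548)/48)·B_1(t) − (19r^5+235r^4+1305r^3+3765r^2+5616r+3140)/480, where B_k(t) = (t+1)(t+2)···(t+k)/k!. Then for every integer r there exists an integer t such that P_r(t) is not an integer. -/
/-- The binomial-basis polynomial `B_k(t) = (t+1)(t+2)⋯(t+k)/k!` evaluated at an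
integer `t`, as a rational number. -/
def binomBasis (k : ℕ) (t : ℤ) : ℚ :=
  (∏ i ∈ Finset.range k, ((t : ℚ) + i + 1)) / (Nat.factorial k)

/-- The candidate Hilbert polynomial of the dual of a rank 3 bundle on ℙ⁵ whose
section would vanish on a double structure with twist `r` on a plane, expanded
in the binomial basis. -/
def candidateHilbertPoly (r t : ℤ) : ℚ :=
  3 * binomBasis 5 t - ((r : ℚ) - 3) * binomBasis 4 t +
    ((r : ℚ) ^ 2 + 7 * r + 10) * binomBasis 3 t +
    ((7 * (r : ℚ) ^ 3 + 30 * r ^ 2 + 29 * r - 54) / 12) * binomBasis 2 t +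
    (((r : ℚ) ^ 4 - 24 * r ^ 3 - 197 * r ^ 2 - 560 * r - 548) / 48) * binomBasis 1 t -
    (19 * (r : ℚ) ^ 5 + 235 * r ^ 4 + 1305 * r ^ 3 + 3765 * r ^ 2 + 5616 * r + 3140) / 480

/-!
Every `B_k` with `k ≥ 1` vanishes at `t = -1`, so `P_r(-1) = -N(r)/480`, where `N(r)` is the
numerator of the constant term. Modulo 3 we have `N(x) ≡ x⁵ + x⁴ + 2`, which has no root in
`ZMod 3`; hence `3 ∤ N(r)`, a fortiori `480 ∤ N(r)`, and `P_r(-1)` is not an integer.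
-/

def constantTermNumerator (r : ℤ) : ℤ :=
  19 * r ^ 5 + 235 * r ^ 4 + 1305 * r ^ 3 + 3765 * r ^ 2 + 5616 * r + 3140

theorem binomBasis_neg_one {k : ℕ} (hk : k ≠ 0) : binomBasis k (-1) = 0 := by
  obtain ⟨k, rfl⟩ := Nat.exists_eq_succ_of_ne_zero hk
  simp [binomBasis, Finset.prod_range_succ']

theorem candidateHilbertPoly_neg_one (r : ℤ) :
    candidateHilbertPoly r (-1) = -(constantTermNumerator r : ℚ) / 480 := by
  simp only [candidateHilbertPoly, constantTermNumerator, binomBasis_neg_one (Nat.succ_ne_zero _)]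
  push_cast
  ring

theorem three_not_dvd_constantTermNumerator (r : ℤ) : ¬ (3 : ℤ) ∣ constantTermNumerator r := by
  intro h
  have h3 := (ZMod.intCast_zmod_eq_zero_iff_dvd (constantTermNumerator r) 3).mpr h
  rw [constantTermNumerator] at h3
  push_cast at h3
  revert h3
  generalize (r : ZMod 3) = x
  revert x
  decide

theorem intCast_div_ne_intCast {m d : ℤ} (hd : d ≠ 0) (hdvd : ¬ d ∣ m) (n : ℤ) :
    (m : ℚ) / d ≠ n := by
  intro h
  refine hdvd ⟨n, ?_⟩
  rw [div_eq_iff (Int.cast_ne_zero.mpr hd)] at h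
  exact_mod_cast h.trans (mul_comm _ _)

/-- For every twist `r` there is an integer `t` at which the candidate Hilbert
polynomial is not an integer (failure of the Schwarzenberger conditions). -/
theorem candidateHilbertPoly_not_integer_valued :
    ∀ r : ℤ, ∃ t : ℤ, ∀ n : ℤ, candidateHilbertPoly r t ≠ (n : ℚ) := by
  intro r
  refine ⟨-1, fun n => ?_⟩
  have h480 : ¬ (480 : ℤ) ∣ -constantTermNumerator r := fun h =>
    three_not_dvd_constantTermNumerator r <|
      dvd_neg.mp ((show (3 : ℤ) ∣ 480 by norm_num).trans h)
  rw [candidateHilbertPoly_neg_one]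
  exact_mod_cast intCast_div_ne_intCast (by norm_num) h480 n
end

section
/- Let R be a unique factorization domain in which 2 is a unit, and let a, b ∈ R be nonzero elements that are relatively prime (every common divisor of a and b is a unit). Define α : R → R^3 by α(x) = (a^2 x, 2ab x, b^2 x) and β : R^3 → R^2 by β(u, v, w) = (2b u − a v, −b v + 2a w). Then α is injective, β ∘ α = 0, and the kernel of β equals the image of α. -/
/-! The kernel of `β` is cut out by `2bu = av` and `bv = 2aw`. Since `a` is prime to `2b`, the
first equation gives `u = ay`, `v = 2by`; the second then reads `b²y = aw`, and since `a` is
prime to `b²` this gives `y = ax`, `w = b²x`. -/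

theorem IsRelPrime.exists_eq_mul_of_mul_eq {M : Type*} [CommMonoid M] [Zero M]
    [IsLeftCancelMulZero M] [DecompositionMonoid M] {a c y w : M} (hac : IsRelPrime a c)
    (ha : a ≠ 0) (h : c * y = a * w) : ∃ x, y = a * x ∧ w = c * x := by
  obtain ⟨x, rfl⟩ := hac.dvd_of_dvd_mul_left ⟨w, h⟩
  refine ⟨x, rfl, mul_left_cancel₀ ha ?_⟩
  rw [← h, mul_left_comm]

theorem exists_eq_of_double_conic_relations {R : Type*} [CommRing R] [IsDomain R]
    [DecompositionMonoid R] {a b : R} (h2 : IsUnit (2 : R)) (ha : a ≠ 0)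
    (hab : IsRelPrime a b) {u v w : R} (huv : 2 * b * u = a * v) (hvw : b * v = 2 * a * w) :
    ∃ x, u = a ^ 2 * x ∧ v = 2 * a * b * x ∧ w = b ^ 2 * x := by
  obtain ⟨y, rfl, rfl⟩ :=
    ((isRelPrime_mul_unit_left_right h2).mpr hab).exists_eq_mul_of_mul_eq ha huv
  have hyw : b ^ 2 * y = a * w :=
    mul_left_cancel₀ h2.ne_zero (by linear_combination hvw)
  obtain ⟨x, rfl, rfl⟩ := (hab.pow_right (n := 2)).exists_eq_mul_of_mul_eq ha hyw
  exact ⟨x, by ring, by ring, rfl⟩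

theorem exact_sequence_double_conic_general {R : Type*} [CommRing R] [IsDomain R]
    [UniqueFactorizationMonoid R] (h2 : IsUnit (2 : R))
    (a b : R) (ha : a ≠ 0) (hab : IsRelPrime a b)
    (α : R → R × R × R) (β : R × R × R → R × R)
    (hα : ∀ x, α x = (a ^ 2 * x, 2 * a * b * x, b ^ 2 * x))
    (hβ : ∀ u v w : R, β (u, v, w) = (2 * b * u - a * v, -(b * v) + 2 * a * w)) :
    Function.Injective α ∧ (∀ x, β (α x) = 0) ∧
      (∀ v, β v = 0 ↔ v ∈ Set.range α) := by
  have hβα (x : R) : β (α x) = 0 := by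
    rw [hα, hβ, Prod.mk_eq_zero]
    constructor <;> ring
  refine ⟨fun x y hxy => ?_, hβα, ?_⟩
  · rw [hα, hα] at hxy
    exact mul_left_cancel₀ (pow_ne_zero 2 ha) (congrArg Prod.fst hxy)
  rintro ⟨u, v, w⟩
  refine ⟨fun hker => ?_, ?_⟩
  · rw [hβ, Prod.mk_eq_zero] at hker
    have huv : 2 * b * u = a * v := by linear_combination hker.1
    have hvw : b * v = 2 * a * w := by linear_combination -hker.2
    obtain ⟨x, hu, hv, hw⟩ := exists_eq_of_double_conic_relations h2 ha hab huv hvw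
    exact ⟨x, by rw [hα, hu, hv, hw]⟩
  · rintro ⟨x, hx⟩
    rw [← hx]
    exact hβα x

/-- Exactness of the sequence `0 → R → R³ → R²` given by the column
`(a², 2ab, b²)` and the matrix `((2b, −a, 0), (0, −b, 2a))`, for `a, b`
nonzero relatively prime elements of a UFD in which `2` is a unit. -/
theorem exact_sequence_double_conic {R : Type*} [CommRing R] [IsDomain R]
    [UniqueFactorizationMonoid R] (h2 : IsUnit (2 : R))
    (a b : R) (ha : a ≠ 0) (hb : b ≠ 0) (hab : IsRelPrime a b)
    (α : R → R × R × R) (β : R × R × R → R × R)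
    (hα : ∀ x, α x = (a ^ 2 * x, 2 * a * b * x, b ^ 2 * x))
    (hβ : ∀ u v w : R, β (u, v, w) = (2 * b * u - a * v, -(b * v) + 2 * a * w)) :
    Function.Injective α ∧ (∀ x, β (α x) = 0) ∧
      (∀ v, β v = 0 ↔ v ∈ Set.range α) :=
  exact_sequence_double_conic_general h2 a b ha hab α β hα hβ
end
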